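/- arXiv:1802.00612 — 3 statements merged into one kernel-verified Lean document; each statement's English description precedes it below -/
import Mathlib

section
/- For every x > 0 and every λ ≤ 0 one has E[exp(λ S(x))] = exp(−f(λ,x)), where f(λ,x) = ∫₀^∞ (1 − exp(α^{−1/α} λ (x+y)^{−1/α})) dy. -/
/-!
The arrival times `τ j` are the points of a unit-rate Poisson process on `(0, ∞)`, and the claim
is Campbell's formula `E[∏ⱼ h (τ j)] = exp (-∫₀^∞ (1 - h))` for `h = exp (λ g)`,
`g y = α^{-1/α} (x + y)^{-1/α}`. With the compensator `F t = exp ∫₀ᵗ (1 - h)`, the products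
`Mₙ = (∏_{j<n} h (τ j)) · F (Γ 0 + ⋯ + Γ (n-1))` all have expectation `1`: the next gap is an
`Exp(1)` variable independent of the past, and `∫₀^∞ e^{-s} h (t+s) F (t+s) ds = F t` because
`F' = (1 - h) F` makes the integrand the derivative of `-e^{-s} F (t+s)`. Since
`0 ≤ Mₙ ≤ exp ∫₀^∞ (1 - h)` and, by the strong law of large numbers, `τ n` grows linearly,
dominated convergence gives the formula; linear growth and the integral test also make
`∑ⱼ g (τ j)` converge.
-/

open MeasureTheory ProbabilityTheory Real Set Filter Topology

section ExponentialLaw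

lemma expMeasure_one_eq_withDensity :
    expMeasure 1 = (volume.restrict (Ioi 0)).withDensity fun s => ENNReal.ofReal (exp (-s)) := by
  have hdensity : gammaPDF 1 1 = (Ici 0).indicator fun s => ENNReal.ofReal (exp (-s)) := by
    ext s
    by_cases hs : 0 ≤ s <;> simp [gammaPDF_eq, hs]
  rw [expMeasure, gammaMeasure, hdensity, withDensity_indicator measurableSet_Ici,
    Measure.restrict_congr_set Ioi_ae_eq_Ici.symm]

lemma lintegral_exp_neg_Ioi (b : ℝ) :
    ∫⁻ s in Ioi b, ENNReal.ofReal (exp (-s)) = ENNReal.ofReal (exp (-b)) := by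
  have hint : Integrable (fun s => exp (-s)) (volume.restrict (Ioi b)) := by
    simpa using (exp_neg_integrableOn_Ioi b one_pos).integrable
  rw [← ofReal_integral_eq_lintegral_ofReal hint (ae_of_all _ fun s => (exp_pos _).le),
    integral_exp_neg_Ioi]

lemma expMeasure_one_Ici (a : ℝ) : expMeasure 1 (Ici a) = ENNReal.ofReal (exp (-max a 0)) := by
  rw [expMeasure_one_eq_withDensity, withDensity_apply _ measurableSet_Ici,
    Measure.restrict_restrict measurableSet_Ici,
    setLIntegral_congr ((Ioi_ae_eq_Ici (a := a)).symm.inter (ae_eq_refl (Ioi (0:ℝ)))),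
    Ioi_inter_Ioi, lintegral_exp_neg_Ioi]

variable {Ω : Type*} [MeasurableSpace Ω] {μ : Measure Ω}

lemma map_eq_expMeasure_one_of_tail [IsProbabilityMeasure μ] {X : Ω → ℝ} (hX : Measurable X)
    (htail : ∀ u : ℝ, 0 ≤ u → μ {ω | u ≤ X ω} = ENNReal.ofReal (exp (-u))) :
    μ.map X = expMeasure 1 := by
  have : IsProbabilityMeasure (μ.map X) := Measure.isProbabilityMeasure_map hX.aemeasurable
  refine Measure.ext_of_Ici _ _ fun a => ?_
  rw [Measure.map_apply hX measurableSet_Ici, expMeasure_one_Ici, ← htail _ (le_max_right a 0)]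
  rcases le_total a 0 with ha | ha
  · rw [max_eq_right ha]
    refine le_antisymm ?_ (measure_mono fun ω (hω : 0 ≤ X ω) => ha.trans hω)
    rw [htail 0 le_rfl]
    simpa using prob_le_one
  · rw [max_eq_left ha]; rfl

lemma ae_nonneg_of_map_eq_expMeasure_one {X : Ω → ℝ} (hX : Measurable X)
    (hlaw : μ.map X = expMeasure 1) : ∀ᵐ ω ∂μ, 0 ≤ X ω := by
  refine ae_of_ae_map hX.aemeasurable ?_
  rw [hlaw, expMeasure_one_eq_withDensity]
  exact (withDensity_absolutelyContinuous _ _).ae_le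
    (ae_restrict_of_forall_mem measurableSet_Ioi fun s hs => le_of_lt hs)

lemma integral_expMeasure_one (f : ℝ → ℝ) :
    ∫ s, f s ∂expMeasure 1 = ∫ s in Ioi 0, exp (-s) * f s := by
  rw [expMeasure_one_eq_withDensity]
  exact integral_withDensity_eq_integral_smul (measurable_neg.exp.real_toNNReal) f |>.trans
    (setIntegral_congr_fun measurableSet_Ioi fun s _ => by
      simp [NNReal.smul_def, Real.coe_toNNReal _ (exp_pos _).le])

lemma integrable_id_expMeasure_one : Integrable id (expMeasure 1) := by
  rw [expMeasure_one_eq_withDensity]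
  refine (integrable_withDensity_iff_integrable_smul measurable_neg.exp.real_toNNReal).mpr ?_
  refine (GammaIntegral_convergent two_pos).congr_fun (fun s _ => ?_) measurableSet_Ioi
  simp [NNReal.smul_def, Real.coe_toNNReal _ (exp_pos _).le]
  norm_num

lemma integral_id_expMeasure_one : ∫ s, s ∂expMeasure 1 = 1 := by
  rw [integral_expMeasure_one, ← Real.Gamma_two, Real.Gamma_eq_integral two_pos]
  norm_num

end ExponentialLaw

lemma ProbabilityTheory.IndepFun.integral_comp_prodMk_eq_integral_integral
    {Ω β γ : Type*} [MeasurableSpace Ω] [MeasurableSpace β] [MeasurableSpace γ]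
    {μ : Measure Ω} [IsFiniteMeasure μ] {Z : Ω → β} {E : Ω → γ}
    (hZE : IndepFun Z E μ) (hZ : Measurable Z) (hE : Measurable E) {Ψ : β × γ → ℝ}
    (hΨ : Measurable Ψ) (hint : Integrable (fun ω => Ψ (Z ω, E ω)) μ) :
    ∫ ω, Ψ (Z ω, E ω) ∂μ = ∫ ω, ∫ e, Ψ (Z ω, e) ∂(μ.map E) ∂μ := by
  have hlaw := (indepFun_iff_map_prod_eq_prod_map_map hZ.aemeasurable hE.aemeasurable).mp hZE
  have hΨint : Integrable Ψ ((μ.map Z).prod (μ.map E)) := by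
    rwa [← hlaw, integrable_map_measure hΨ.aestronglyMeasurable (hZ.prodMk hE).aemeasurable]
  rw [← integral_map (hZ.prodMk hE).aemeasurable hΨ.aestronglyMeasurable, hlaw,
    integral_prod _ hΨint,
    integral_map hZ.aemeasurable hΨint.integral_prod_left.aestronglyMeasurable]

section Compensator

variable {h : ℝ → ℝ}

noncomputable def compensator (h : ℝ → ℝ) (t : ℝ) : ℝ := exp (∫ y in (0:ℝ)..t, (1 - h y))

lemma hasDerivAt_compensator (hh : Continuous h) (t : ℝ) :
    HasDerivAt (compensator h) ((1 - h t) * compensator h t) t := by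
  have hc : Continuous fun y => 1 - h y := continuous_const.sub hh
  have := (intervalIntegral.integral_hasDerivAt_right (hc.intervalIntegrable 0 t)
    (hc.stronglyMeasurableAtFilter _ _) hc.continuousAt).exp
  rw [mul_comm] at this
  exact this

lemma continuous_compensator (hh : Continuous h) : Continuous (compensator h) :=
  continuous_iff_continuousAt.mpr fun t => (hasDerivAt_compensator hh t).continuousAt

lemma compensator_pos (t : ℝ) : 0 < compensator h t := exp_pos _

lemma compensator_le (h1 : ∀ t, h t ≤ 1) (hint : IntegrableOn (fun t => 1 - h t) (Ioi 0))
    (t : ℝ) : compensator h t ≤ exp (∫ y in Ioi 0, (1 - h y)) := by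
  have hnonneg : ∀ y, 0 ≤ 1 - h y := fun y => sub_nonneg.mpr (h1 y)
  refine exp_le_exp.mpr ?_
  rcases le_total t 0 with ht | ht
  · calc ∫ y in (0:ℝ)..t, (1 - h y) = -∫ y in t..0, (1 - h y) :=
          intervalIntegral.integral_symm _ _
      _ ≤ 0 := neg_nonpos.mpr (intervalIntegral.integral_nonneg ht fun y _ => hnonneg y)
      _ ≤ _ := setIntegral_nonneg measurableSet_Ioi fun y _ => hnonneg y
  · rw [intervalIntegral.integral_of_le ht]
    exact setIntegral_mono_set hint (ae_of_all _ fun y => hnonneg y)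
      Ioc_subset_Ioi_self.eventuallyLE

lemma norm_prod_mul_compensator_le {ι : Type*} (h0 : ∀ t, 0 ≤ h t) (h1 : ∀ t, h t ≤ 1)
    (hint : IntegrableOn (fun t => 1 - h t) (Ioi 0)) (s : Finset ι) (a : ι → ℝ) (t : ℝ) :
    ‖(∏ j ∈ s, h (a j)) * compensator h t‖ ≤ exp (∫ y in Ioi 0, (1 - h y)) := by
  rw [norm_mul, Real.norm_of_nonneg (Finset.prod_nonneg fun j _ => h0 _),
    Real.norm_of_nonneg (compensator_pos t).le]
  calc _ ≤ 1 * compensator h t := mul_le_mul_of_nonneg_right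
        (Finset.prod_le_one (fun j _ => h0 _) fun j _ => h1 _) (compensator_pos t).le
    _ ≤ _ := by rw [one_mul]; exact compensator_le h1 hint t

lemma tendsto_compensator_atTop (hint : IntegrableOn (fun t => 1 - h t) (Ioi 0)) :
    Tendsto (compensator h) atTop (𝓝 (exp (∫ y in Ioi 0, (1 - h y)))) :=
  (intervalIntegral_tendsto_integral_Ioi 0 hint tendsto_id).rexp

lemma integral_exp_neg_mul_compensator (hh : Continuous h) (h0 : ∀ t, 0 ≤ h t)
    (h1 : ∀ t, h t ≤ 1) (hint : IntegrableOn (fun t => 1 - h t) (Ioi 0)) (t : ℝ) :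
    ∫ s in Ioi 0, exp (-s) * (h (t + s) * compensator h (t + s)) = compensator h t := by
  have hderiv : ∀ s, HasDerivAt (fun s => -(exp (-s) * compensator h (t + s)))
      (exp (-s) * (h (t + s) * compensator h (t + s))) s := fun s => by
    have hF := (hasDerivAt_compensator hh (t + s)).comp s ((hasDerivAt_id s).const_add t)
    refine ((hasDerivAt_neg s).exp.mul hF).neg.congr_deriv ?_
    simp only [Function.comp_apply]
    ring
  have hdecay : Tendsto (fun s => -(exp (-s) * compensator h (t + s))) atTop (𝓝 0) := by
    have hbound := tendsto_exp_neg_atTop_nhds_zero.mul_const (exp (∫ y in Ioi 0, (1 - h y)))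
    rw [zero_mul] at hbound
    have hsqueeze : Tendsto (fun s => exp (-s) * compensator h (t + s)) atTop (𝓝 0) :=
      squeeze_zero (fun s => (mul_pos (exp_pos _) (exp_pos _)).le)
        (fun s => mul_le_mul_of_nonneg_left (compensator_le h1 hint (t + s)) (exp_pos _).le)
        hbound
    simpa using hsqueeze.neg
  rw [integral_Ioi_of_hasDerivAt_of_nonneg' (fun s _ => hderiv s)
    (fun s _ => mul_nonneg (exp_pos _).le (mul_nonneg (h0 _) (exp_pos _).le)) hdecay]
  simp

end Compensator

lemma ProbabilityTheory.iIndepFun.indepFun_of_measurable_iSup_comap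
    {Ω ι β γ : Type*} [MeasurableSpace Ω] [MeasurableSpace β] [MeasurableSpace γ]
    {μ : Measure Ω} {f : ι → Ω → β} (hf : iIndepFun f μ) (hfmeas : ∀ i, Measurable (f i))
    {S : Set ι} {j : ι} (hj : j ∉ S) {Z : Ω → γ}
    (hZ : Measurable[⨆ i ∈ S, MeasurableSpace.comap (f i) inferInstance] Z) :
    IndepFun Z (f j) μ := by
  have hindep := indep_iSup_of_disjoint (fun i => (hfmeas i).comap_le)
    ((iIndepFun_iff_iIndep _ _ _).mp hf) (Set.disjoint_singleton_right.mpr hj)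
  rw [IndepFun_iff_Indep]
  exact indep_of_indep_of_le_left (indep_of_indep_of_le_right hindep
    (le_iSup₂ (f := fun i (_ : i ∈ ({j} : Set ι)) => MeasurableSpace.comap (f i) _) j rfl))
    hZ.comap_le

lemma measurable_iSup_comap_prodMk_prod_sum_range {Ω : Type*} {Γ : ℕ → Ω → ℝ} {h : ℝ → ℝ}
    (hh : Measurable h) (n : ℕ) :
    Measurable[⨆ i ∈ Set.Iio n, MeasurableSpace.comap (Γ i) inferInstance] fun ω =>
      (∏ j ∈ Finset.range n, h (∑ k ∈ Finset.range (j + 1), Γ k ω),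
        ∑ k ∈ Finset.range n, Γ k ω) := by
  have hΓpast : ∀ k < n,
      Measurable[⨆ i ∈ Set.Iio n, MeasurableSpace.comap (Γ i) inferInstance] (Γ k) :=
    fun k hk => Measurable.of_comap_le (le_iSup₂ (f := fun k (_ : k ∈ Set.Iio n) =>
      MeasurableSpace.comap (Γ k) inferInstance) k hk)
  refine Measurable.prodMk (Finset.measurable_prod _ fun j hj => hh.comp
    (Finset.measurable_sum _ fun k hk => hΓpast k ?_))
    (Finset.measurable_sum _ fun k hk => hΓpast k ?_)
  · simp only [Finset.mem_range] at hj hk; omega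
  · simpa using hk

section ArrivalTimes

variable {Ω : Type*} [MeasurableSpace Ω] {μ : Measure Ω} {Γ : ℕ → Ω → ℝ}

lemma ae_tendsto_inv_mul_sum_range (hΓmeas : ∀ k, Measurable (Γ k))
    (hΓindep : iIndepFun Γ μ) (hΓlaw : ∀ k, μ.map (Γ k) = expMeasure 1) :
    ∀ᵐ ω ∂μ, Tendsto (fun n : ℕ => (n : ℝ)⁻¹ * ∑ k ∈ Finset.range n, Γ k ω) atTop (𝓝 1) := by
  have hint : Integrable (Γ 0) μ := by
    refine (integrable_map_measure aestronglyMeasurable_id (hΓmeas 0).aemeasurable).mp ?_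
    rw [hΓlaw 0]
    exact integrable_id_expMeasure_one
  have hmean : μ[Γ 0] = 1 := by
    rw [← integral_id_expMeasure_one, ← hΓlaw 0]
    exact (integral_map (hΓmeas 0).aemeasurable aestronglyMeasurable_id).symm
  have hident : ∀ i, IdentDistrib (Γ i) (Γ 0) μ μ := fun i =>
    ⟨(hΓmeas i).aemeasurable, (hΓmeas 0).aemeasurable, (hΓlaw i).trans (hΓlaw 0).symm⟩
  simpa [hmean] using strong_law_ae Γ hint (fun i j hij => hΓindep.indepFun hij) hident

lemma ae_eventually_half_le_sum_range (hΓmeas : ∀ k, Measurable (Γ k))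
    (hΓindep : iIndepFun Γ μ) (hΓlaw : ∀ k, μ.map (Γ k) = expMeasure 1) :
    ∀ᵐ ω ∂μ, ∀ᶠ n : ℕ in atTop, 2⁻¹ * (n : ℝ) ≤ ∑ k ∈ Finset.range n, Γ k ω := by
  filter_upwards [ae_tendsto_inv_mul_sum_range hΓmeas hΓindep hΓlaw] with ω hω
  filter_upwards [hω.eventually (lt_mem_nhds one_half_lt_one), eventually_gt_atTop 0]
    with n hn hn0
  have hn0' : (0 : ℝ) < n := Nat.cast_pos.mpr hn0
  rw [inv_mul_eq_div, lt_div_iff₀ hn0'] at hn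
  linarith

lemma integral_prod_mul_compensator_eq_one {h : ℝ → ℝ} (hΓmeas : ∀ k, Measurable (Γ k))
    (hΓindep : iIndepFun Γ μ) (hΓlaw : ∀ k, μ.map (Γ k) = expMeasure 1) (hh : Continuous h)
    (h0 : ∀ t, 0 ≤ h t) (h1 : ∀ t, h t ≤ 1) (hint : IntegrableOn (fun t => 1 - h t) (Ioi 0))
    (n : ℕ) :
    ∫ ω, (∏ j ∈ Finset.range n, h (∑ k ∈ Finset.range (j + 1), Γ k ω)) *
      compensator h (∑ k ∈ Finset.range n, Γ k ω) ∂μ = 1 := by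
  have := hΓindep.isProbabilityMeasure
  induction n with
  | zero => simp [compensator]
  | succ n ih =>
    set P : Ω → ℝ := fun ω => ∏ j ∈ Finset.range n, h (∑ k ∈ Finset.range (j + 1), Γ k ω)
    set T : Ω → ℝ := fun ω => ∑ k ∈ Finset.range n, Γ k ω
    set Ψ : (ℝ × ℝ) × ℝ → ℝ := fun w =>
      w.1.1 * (h (w.1.2 + w.2) * compensator h (w.1.2 + w.2))
    have hPTpast := measurable_iSup_comap_prodMk_prod_sum_range (Γ := Γ) hh.measurable n
    have hPT : Measurable fun ω => (P ω, T ω) :=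
      hPTpast.mono (iSup₂_le fun k _ => (hΓmeas k).comap_le) le_rfl
    have hF := continuous_compensator hh
    have hΨ : Measurable Ψ := Continuous.measurable (by fun_prop)
    have hsplit : ∀ ω, (∏ j ∈ Finset.range (n + 1), h (∑ k ∈ Finset.range (j + 1), Γ k ω)) *
        compensator h (∑ k ∈ Finset.range (n + 1), Γ k ω) = Ψ ((P ω, T ω), Γ n ω) := by
      intro ω
      rw [Finset.prod_range_succ, Finset.sum_range_succ]
      simp only [Ψ, P, T]
      ring
    have hintegrable : Integrable (fun ω => Ψ ((P ω, T ω), Γ n ω)) μ := by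
      refine Integrable.of_bound (hΨ.comp (hPT.prodMk (hΓmeas n))).aestronglyMeasurable
        (exp (∫ y in Ioi 0, (1 - h y))) (ae_of_all _ fun ω => ?_)
      rw [← hsplit]
      exact norm_prod_mul_compensator_le h0 h1 hint _ _ _
    calc _ = ∫ ω, Ψ ((P ω, T ω), Γ n ω) ∂μ := integral_congr_ae (ae_of_all _ hsplit)
      _ = ∫ ω, ∫ e, Ψ ((P ω, T ω), e) ∂(μ.map (Γ n)) ∂μ :=
        (hΓindep.indepFun_of_measurable_iSup_comap hΓmeas Set.self_notMem_Iio hPTpast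
          ).integral_comp_prodMk_eq_integral_integral hPT (hΓmeas n) hΨ hintegrable
      _ = ∫ ω, P ω * compensator h (T ω) ∂μ := by
        refine integral_congr_ae (ae_of_all _ fun ω => ?_)
        dsimp only
        rw [hΓlaw n, integral_expMeasure_one,
          ← integral_exp_neg_mul_compensator hh h0 h1 hint (T ω), ← integral_const_mul]
        congr 1 with s
        ring
      _ = 1 := ih

theorem integral_eq_exp_neg_integral_one_sub_of_hasProd {h : ℝ → ℝ}
    (hΓmeas : ∀ k, Measurable (Γ k)) (hΓindep : iIndepFun Γ μ)
    (hΓlaw : ∀ k, μ.map (Γ k) = expMeasure 1) (hh : Continuous h) (h0 : ∀ t, 0 ≤ h t)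
    (h1 : ∀ t, h t ≤ 1) (hint : IntegrableOn (fun t => 1 - h t) (Ioi 0)) {P : Ω → ℝ}
    (hP : ∀ᵐ ω ∂μ, HasProd (fun j => h (∑ k ∈ Finset.range (j + 1), Γ k ω)) (P ω)) :
    ∫ ω, P ω ∂μ = exp (-∫ y in Ioi 0, (1 - h y)) := by
  have := hΓindep.isProbabilityMeasure
  set B := exp (∫ y in Ioi 0, (1 - h y))
  set M : ℕ → Ω → ℝ := fun n ω =>
    (∏ j ∈ Finset.range n, h (∑ k ∈ Finset.range (j + 1), Γ k ω)) *
      compensator h (∑ k ∈ Finset.range n, Γ k ω)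
  have hsum : ∀ n, Measurable fun ω => ∑ k ∈ Finset.range n, Γ k ω := fun n =>
    Finset.measurable_sum _ fun k _ => hΓmeas k
  have hMmeas : ∀ n, AEStronglyMeasurable (M n) μ := fun n =>
    ((Finset.measurable_prod _ fun j _ => hh.measurable.comp (hsum (j + 1))).mul
      ((continuous_compensator hh).measurable.comp (hsum n))).aestronglyMeasurable
  have hMlim : ∀ᵐ ω ∂μ, Tendsto (fun n => M n ω) atTop (𝓝 (P ω * B)) := by
    filter_upwards [hP, ae_eventually_half_le_sum_range hΓmeas hΓindep hΓlaw] with ω hPω hgrowth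
    have hT : Tendsto (fun n => ∑ k ∈ Finset.range n, Γ k ω) atTop atTop :=
      tendsto_atTop_mono' atTop hgrowth
        (tendsto_natCast_atTop_atTop.const_mul_atTop (inv_pos.mpr two_pos))
    exact hPω.tendsto_prod_nat.mul ((tendsto_compensator_atTop hint).comp hT)
  have hlim := tendsto_integral_of_dominated_convergence (fun _ => B) hMmeas (integrable_const B)
    (fun n => ae_of_all _ fun ω => norm_prod_mul_compensator_le h0 h1 hint _ _ _) hMlim
  simp only [M, integral_prod_mul_compensator_eq_one hΓmeas hΓindep hΓlaw hh h0 h1 hint,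
    integral_mul_const] at hlim
  rw [exp_neg, eq_inv_of_mul_eq_one_left (tendsto_nhds_unique tendsto_const_nhds hlim).symm]

lemma ae_summable_comp_sum_range {g : ℝ → ℝ} (hΓmeas : ∀ k, Measurable (Γ k))
    (hΓindep : iIndepFun Γ μ) (hΓlaw : ∀ k, μ.map (Γ k) = expMeasure 1) (hg0 : ∀ t, 0 ≤ g t)
    (hganti : AntitoneOn g (Ici 0)) (hgint : IntegrableOn g (Ioi 0)) :
    ∀ᵐ ω ∂μ, Summable fun j => g (∑ k ∈ Finset.range (j + 1), Γ k ω) := by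
  have hhalf : Summable fun j : ℕ => g (2⁻¹ * j) := by
    refine AntitoneOn.summable_of_integrableOn_Ioi_zero (fun a ha b hb hab => ?_) ?_
      fun t _ => hg0 _
    · have hc : (0 : ℝ) ≤ 2⁻¹ := by norm_num
      exact hganti (mul_nonneg hc ha) (mul_nonneg hc hb) (mul_le_mul_of_nonneg_left hab hc)
    · simpa using (integrableOn_Ioi_comp_mul_left_iff g 0 (inv_pos.mpr two_pos)).mpr
        (by simpa using hgint)
  filter_upwards [ae_eventually_half_le_sum_range hΓmeas hΓindep hΓlaw] with ω hgrowth
  refine hhalf.of_norm_bounded_eventually ?_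
  rw [Nat.cofinite_eq_atTop]
  filter_upwards [(tendsto_add_atTop_nat 1).eventually hgrowth] with j hj
  have hjle : 2⁻¹ * (j : ℝ) ≤ ∑ k ∈ Finset.range (j + 1), Γ k ω := by
    push_cast at hj
    linarith
  have hj0 : (0 : ℝ) ≤ 2⁻¹ * j := by positivity
  rw [Real.norm_of_nonneg (hg0 _)]
  exact hganti hj0 (hj0.trans hjle) hjle

lemma integrable_one_sub_exp_mul {α : Type*} [MeasurableSpace α] {ν : Measure α} {g : α → ℝ}
    (hg : Integrable g ν) (hg0 : ∀ a, 0 ≤ g a) {lam : ℝ} (hlam : lam ≤ 0) :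
    Integrable (fun a => 1 - exp (lam * g a)) ν := by
  refine (hg.const_mul (-lam)).mono'
    ((continuous_const.sub continuous_exp).comp_aestronglyMeasurable
      (hg.aestronglyMeasurable.const_mul lam)) (ae_of_all _ fun a => ?_)
  have hy : lam * g a ≤ 0 := mul_nonpos_of_nonpos_of_nonneg hlam (hg0 a)
  rw [Real.norm_of_nonneg (sub_nonneg.mpr (exp_le_one_iff.mpr hy))]
  linarith [add_one_le_exp (lam * g a)]

theorem integral_exp_mul_tsum_comp_sum_range {g : ℝ → ℝ} (hΓmeas : ∀ k, Measurable (Γ k))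
    (hΓindep : iIndepFun Γ μ) (hΓlaw : ∀ k, μ.map (Γ k) = expMeasure 1) (hg : Continuous g)
    (hg0 : ∀ t, 0 ≤ g t) (hganti : AntitoneOn g (Ici 0)) (hgint : IntegrableOn g (Ioi 0))
    {lam : ℝ} (hlam : lam ≤ 0) :
    ∫ ω, exp (lam * ∑' j, g (∑ k ∈ Finset.range (j + 1), Γ k ω)) ∂μ =
      exp (-∫ y in Ioi 0, (1 - exp (lam * g y))) := by
  refine integral_eq_exp_neg_integral_one_sub_of_hasProd hΓmeas hΓindep hΓlaw
    (continuous_exp.comp (continuous_const.mul hg)) (fun t => (exp_pos _).le)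
    (fun t => exp_le_one_iff.mpr (mul_nonpos_of_nonpos_of_nonneg hlam (hg0 t)))
    (integrable_one_sub_exp_mul hgint hg0 hlam) ?_
  filter_upwards [ae_summable_comp_sum_range hΓmeas hΓindep hΓlaw hg0 hganti hgint] with ω hω
  exact (hω.hasSum.mul_left lam).rexp

end ArrivalTimes

section PowerKernel

-- `max t 0` extends the kernel `(x + t) ^ p` continuously to `t < 0`, where no arrival lies.

variable {x p : ℝ}

lemma continuous_rpow_add_max (hx : 0 < x) (p : ℝ) :
    Continuous fun t : ℝ => (x + max t 0) ^ p :=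
  (continuous_const.add (continuous_id.max continuous_const)).rpow_const fun t =>
    Or.inl (add_pos_of_pos_of_nonneg hx (le_max_right t 0)).ne'

lemma antitoneOn_rpow_add_max (hx : 0 < x) (hp : p ≤ 0) :
    AntitoneOn (fun t : ℝ => (x + max t 0) ^ p) (Ici 0) := by
  intro a (ha : 0 ≤ a) b (hb : 0 ≤ b) hab
  simp only [max_eq_left ha, max_eq_left hb]
  exact rpow_le_rpow_of_nonpos (by positivity) (by linarith) hp

lemma integrableOn_rpow_add_max (hx : 0 < x) (hp : p < -1) :
    IntegrableOn (fun t : ℝ => (x + max t 0) ^ p) (Ioi 0) := by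
  have hshift : IntegrableOn (fun t : ℝ => (t + x) ^ p) (Ioi 0) := by
    have := ((measurePreserving_add_right volume x).integrableOn_comp_preimage
      (measurableEmbedding_addRight x) (s := Ioi x) (f := fun t => t ^ p)).mpr
      (integrableOn_Ioi_rpow_of_lt hp hx)
    simpa [Function.comp_def] using this
  refine hshift.congr_fun (fun t (ht : 0 < t) => ?_) measurableSet_Ioi
  rw [max_eq_left ht.le, add_comm]

end PowerKernel

/-- Fix `α ∈ (0,1)`, let `(Γ k)` be i.i.d. standard exponentials with
arrival times `τ i = Γ 0 + ⋯ + Γ i`, and for `x > 0` set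
`S x = ∑_{i} α^{-1/α} (x + τ i)^{-1/α}`. Then for every `x > 0` and every `λ ≤ 0`,
`E[exp (λ S x)] = exp (-f(λ,x))` where
`f(λ,x) = ∫₀^∞ (1 - exp (α^{-1/α} λ (x+y)^{-1/α})) dy`. -/
theorem mgf_of_conditioned_series
    {Ω : Type*} [MeasurableSpace Ω] (μ : Measure Ω) [IsProbabilityMeasure μ]
    (α : ℝ) (hα : α ∈ Set.Ioo (0:ℝ) 1)
    (Γ : ℕ → Ω → ℝ) (hΓmeas : ∀ k, Measurable (Γ k))
    (hΓindep : iIndepFun Γ μ)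
    (hΓtail : ∀ k, ∀ u : ℝ, 0 ≤ u → μ {ω | u ≤ Γ k ω} = ENNReal.ofReal (Real.exp (-u)))
    (τ : ℕ → Ω → ℝ) (hτ : ∀ i ω, τ i ω = ∑ k ∈ Finset.range (i + 1), Γ k ω)
    (S : ℝ → Ω → ℝ)
    (hS : ∀ x ω, S x ω = ∑' i : ℕ, α ^ (-1/α) * (x + τ i ω) ^ (-1/α)) :
    ∀ x > (0:ℝ), ∀ lam ≤ (0:ℝ),
      ∫ ω, Real.exp (lam * S x ω) ∂μ
        = Real.exp (-(∫ y in Set.Ioi (0:ℝ),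
            (1 - Real.exp (α ^ (-1/α) * lam * (x + y) ^ (-1/α))))) := by
  intro x hx lam hlam
  have hp : -1 / α < -1 := by
    rw [neg_div, neg_lt_neg_iff]
    exact (one_lt_div hα.1).mpr hα.2
  have hc : 0 ≤ α ^ (-1 / α) := rpow_nonneg hα.1.le _
  set g : ℝ → ℝ := fun t => α ^ (-1 / α) * (x + max t 0) ^ (-1 / α)
  have hlaw k : μ.map (Γ k) = expMeasure 1 :=
    map_eq_expMeasure_one_of_tail (hΓmeas k) (hΓtail k)
  have hΓnonneg : ∀ᵐ ω ∂μ, ∀ k, 0 ≤ Γ k ω :=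
    ae_all_iff.mpr fun k => ae_nonneg_of_map_eq_expMeasure_one (hΓmeas k) (hlaw k)
  have hSg : ∀ᵐ ω ∂μ, S x ω = ∑' j, g (τ j ω) := by
    filter_upwards [hΓnonneg] with ω hω
    simp only [hS, g, hτ, max_eq_left (Finset.sum_nonneg fun k _ => hω k)]
  simp only [hτ] at hSg
  rw [integral_congr_ae (hSg.mono fun ω hω => by rw [hω]),
    integral_exp_mul_tsum_comp_sum_range (g := g) hΓmeas hΓindep hlaw
      (continuous_const.mul (continuous_rpow_add_max hx _))
      (fun t => mul_nonneg hc (rpow_nonneg (by positivity) _))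
      (fun a ha b hb hab =>
        mul_le_mul_of_nonneg_left (antitoneOn_rpow_add_max hx (by linarith) ha hb hab) hc)
      ((integrableOn_rpow_add_max hx hp).const_mul _) hlam]
  refine congrArg (fun I => exp (-I)) (setIntegral_congr_fun measurableSet_Ioi ?_)
  intro y (hy : 0 < y)
  simp only [g, max_eq_left hy.le]
  ring_nf
end

section
/- For every y with 0 ≤ y ≤ 1/(2−α) one has P( X₁ ≥ y ) ≤ e^{1/4} · exp(−(1/2)(2−α) y²), and for every y with 0 ≤ y ≤ 2/(2−α) one has P( X₁ ≤ −y ) ≤ e^{4/3} · exp(−(1/2)(2−α) y²). -/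
/-!
Chernoff's bound `P(X₁ ≥ y) ≤ e^{-ty} E[e^{tX₁}]` with `t = (2-α)y`. The cumulant
`∫₀¹ (e^{tx} - 1 - tx) x^{-α-1} dx` is controlled by integrating the Taylor bounds
`e^u - 1 - u ≤ u²/2 + u³/4` (`0 ≤ u ≤ 1`) and `e^u - 1 - u ≤ u²/2` (`u ≤ 0`) against
`x^{-α-1}`, which gives `t²/(2(2-α)) + 1/4`, resp. `t²/(2(2-α))`; at `t = ±(2-α)y` the
exponent becomes `-(2-α)y²/2` up to the constant.
-/

open MeasureTheory ProbabilityTheory Real Set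

lemma Real.exp_le_one_add_add_sq_div_two_of_nonpos {x : ℝ} (hx : x ≤ 0) :
    exp x ≤ 1 + x + x ^ 2 / 2 := by
  have hcubic := sum_le_exp_of_nonneg (neg_nonneg.2 hx) 4
  norm_num [Finset.sum_range_succ, Nat.factorial] at hcubic
  have hprod : exp x * exp (-x) = 1 := by rw [← exp_add, add_neg_cancel, exp_zero]
  nlinarith [exp_pos x, mul_le_mul_of_nonneg_left hcubic (exp_pos x).le, pow_two_nonneg x,
    pow_two_nonneg (x ^ 2), mul_nonneg (neg_nonneg.2 hx) (pow_two_nonneg x)]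

lemma Real.exp_le_one_add_add_sq_div_two_add_cube_div_four {x : ℝ} (h0 : 0 ≤ x) (h1 : x ≤ 1) :
    exp x ≤ 1 + x + x ^ 2 / 2 + x ^ 3 / 4 := by
  have h := exp_bound' h0 h1 (n := 3) (by norm_num)
  norm_num [Finset.sum_range_succ, Nat.factorial] at h
  nlinarith [pow_nonneg h0 3]

lemma setIntegral_Ioo_zero_one_rpow {r : ℝ} (hr : -1 < r) :
    ∫ x in Ioo (0 : ℝ) 1, x ^ r = 1 / (r + 1) := by
  rw [← integral_Ioc_eq_integral_Ioo, ← intervalIntegral.integral_of_le zero_le_one,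
    integral_rpow (Or.inl hr), one_rpow, zero_rpow (by linarith)]
  ring

lemma integrableOn_Ioo_zero_one_rpow {r : ℝ} (hr : -1 < r) :
    IntegrableOn (fun x : ℝ => x ^ r) (Ioo 0 1) :=
  (intervalIntegral.integrableOn_Ioo_rpow_iff zero_lt_one).2 hr

/-- `log E[e^{tX}]` for the spectrally positive `α`-stable law with jumps truncated at `1`. -/
noncomputable def smallJumpCumulant (α t : ℝ) : ℝ :=
  ∫ x in Ioo (0 : ℝ) 1, (exp (t * x) - 1 - t * x) * x ^ (-α - 1)

section SmallJumpCumulant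

variable {α t : ℝ}

lemma smallJumpCumulant_le_of_le (hα : α < 2) {a b : ℝ}
    (h : ∀ x ∈ Ioo (0 : ℝ) 1, exp (t * x) - 1 - t * x ≤ a * x ^ 2 + b * x ^ 3) :
    smallJumpCumulant α t ≤ a / (2 - α) + b / (3 - α) := by
  have h1α : -1 < 1 - α := by linarith
  have h2α : -1 < 2 - α := by linarith
  have hint₁ := (integrableOn_Ioo_zero_one_rpow h1α).const_mul a
  have hint₂ := (integrableOn_Ioo_zero_one_rpow h2α).const_mul b
  calc smallJumpCumulant α t
      ≤ ∫ x in Ioo (0 : ℝ) 1, (a * x ^ (1 - α) + b * x ^ (2 - α)) := by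
        refine integral_mono_of_nonneg ?_ (hint₁.add hint₂) ?_
        · filter_upwards [ae_restrict_mem measurableSet_Ioo] with x hx
          have := add_one_le_exp (t * x)
          exact mul_nonneg (by linarith) (rpow_nonneg hx.1.le _)
        · filter_upwards [ae_restrict_mem measurableSet_Ioo] with x hx
          have hpow (n : ℕ) : x ^ n * x ^ (-α - 1) = x ^ ((n : ℝ) - α - 1) := by
            rw [← rpow_natCast, ← rpow_add hx.1]
            ring_nf
          calc (exp (t * x) - 1 - t * x) * x ^ (-α - 1)
              ≤ (a * x ^ 2 + b * x ^ 3) * x ^ (-α - 1) :=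
                mul_le_mul_of_nonneg_right (h x hx) (rpow_nonneg hx.1.le _)
            _ = a * x ^ (1 - α) + b * x ^ (2 - α) := by
                rw [add_mul, mul_assoc, mul_assoc, hpow 2, hpow 3]
                norm_num
                ring_nf
    _ = a / (2 - α) + b / (3 - α) := by
        rw [integral_add hint₁ hint₂, integral_const_mul, integral_const_mul,
          setIntegral_Ioo_zero_one_rpow h1α, setIntegral_Ioo_zero_one_rpow h2α]
        ring_nf

lemma smallJumpCumulant_le_of_nonneg (hα : α < 2) (ht₀ : 0 ≤ t) (ht₁ : t ≤ 1) :
    smallJumpCumulant α t ≤ 1 / 4 + t ^ 2 / (2 * (2 - α)) := by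
  have hcube : t ^ 3 / 4 / (3 - α) ≤ 1 / 4 := by
    rw [div_le_iff₀ (by linarith)]
    nlinarith [pow_le_one₀ ht₀ ht₁ (n := 3), pow_nonneg ht₀ 3]
  have htaylor : ∀ x ∈ Ioo (0 : ℝ) 1,
      exp (t * x) - 1 - t * x ≤ t ^ 2 / 2 * x ^ 2 + t ^ 3 / 4 * x ^ 3 := fun x hx => by
    have := exp_le_one_add_add_sq_div_two_add_cube_div_four (mul_nonneg ht₀ hx.1.le)
      (mul_le_one₀ ht₁ hx.1.le hx.2.le)
    have hexpand : (t * x) ^ 2 / 2 + (t * x) ^ 3 / 4 = t ^ 2 / 2 * x ^ 2 + t ^ 3 / 4 * x ^ 3 := by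
      ring
    linarith
  have := smallJumpCumulant_le_of_le hα htaylor
  rw [div_div] at this
  linarith

lemma smallJumpCumulant_le_of_nonpos (hα : α < 2) (ht : t ≤ 0) :
    smallJumpCumulant α t ≤ t ^ 2 / (2 * (2 - α)) := by
  have htaylor : ∀ x ∈ Ioo (0 : ℝ) 1,
      exp (t * x) - 1 - t * x ≤ t ^ 2 / 2 * x ^ 2 + 0 * x ^ 3 := fun x hx => by
    have := exp_le_one_add_add_sq_div_two_of_nonpos (mul_nonpos_of_nonpos_of_nonneg ht hx.1.le)
    linarith [show (t * x) ^ 2 / 2 = t ^ 2 / 2 * x ^ 2 by ring]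
  simpa [div_div] using smallJumpCumulant_le_of_le hα htaylor

end SmallJumpCumulant

section Chernoff

variable {Ω : Type*} [MeasurableSpace Ω] {μ : Measure Ω} [IsFiniteMeasure μ] {X : Ω → ℝ}
  {σ c y : ℝ}

lemma measureReal_ge_le_of_mgf_le (hσ : 0 < σ) (hy : 0 ≤ y)
    (hint : Integrable (fun ω => exp (σ * y * X ω)) μ)
    (hmgf : mgf X μ (σ * y) ≤ exp (c + (σ * y) ^ 2 / (2 * σ))) :
    μ.real {ω | y ≤ X ω} ≤ exp c * exp (-(1 / 2) * σ * y ^ 2) :=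
  calc μ.real {ω | y ≤ X ω}
      ≤ exp (-(σ * y) * y) * mgf X μ (σ * y) :=
        measure_ge_le_exp_mul_mgf y (mul_nonneg hσ.le hy) hint
    _ ≤ exp (-(σ * y) * y) * exp (c + (σ * y) ^ 2 / (2 * σ)) := by gcongr
    _ = exp c * exp (-(1 / 2) * σ * y ^ 2) := by
        rw [← exp_add, ← exp_add]
        congr 1
        field_simp
        ring

lemma measureReal_le_neg_le_of_mgf_le (hσ : 0 < σ) (hy : 0 ≤ y)
    (hint : Integrable (fun ω => exp (-(σ * y) * X ω)) μ)
    (hmgf : mgf X μ (-(σ * y)) ≤ exp (c + (σ * y) ^ 2 / (2 * σ))) :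
    μ.real {ω | X ω ≤ -y} ≤ exp c * exp (-(1 / 2) * σ * y ^ 2) :=
  calc μ.real {ω | X ω ≤ -y}
      ≤ exp (-(-(σ * y)) * -y) * mgf X μ (-(σ * y)) :=
        measure_le_le_exp_mul_mgf (-y) (neg_nonpos.2 (mul_nonneg hσ.le hy)) hint
    _ ≤ exp (-(-(σ * y)) * -y) * exp (c + (σ * y) ^ 2 / (2 * σ)) := by gcongr
    _ = exp c * exp (-(1 / 2) * σ * y ^ 2) := by
        rw [← exp_add, ← exp_add]
        congr 1
        field_simp
        ring

end Chernoff

theorem gaussian_tail_small_jumps_totally_asymmetric_general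
    {Ω : Type*} [MeasurableSpace Ω] (μ : Measure Ω) [IsProbabilityMeasure μ]
    (α : ℝ) (hα : α ∈ Set.Ioo (1:ℝ) 2)
    (X₁ : Ω → ℝ)
    (hXint : ∀ t : ℝ, Integrable (fun ω => Real.exp (t * X₁ ω)) μ)
    (hmgf : ∀ t : ℝ, ∫ ω, Real.exp (t * X₁ ω) ∂μ
      = Real.exp (∫ x in Set.Ioo (0:ℝ) 1, (Real.exp (t*x) - 1 - t*x) * x ^ (-α-1))) :
    (∀ y : ℝ, 0 ≤ y → y ≤ 1/(2-α) →
      (μ {ω | y ≤ X₁ ω}).toReal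
        ≤ Real.exp (1/4) * Real.exp (-(1/2) * (2-α) * y^2))
    ∧ (∀ y : ℝ, 0 ≤ y → y ≤ 2/(2-α) →
      (μ {ω | X₁ ω ≤ -y}).toReal
        ≤ Real.exp (4/3) * Real.exp (-(1/2) * (2-α) * y^2)) := by
  have hσ : 0 < 2 - α := by linarith [hα.2]
  have hmgf' (t : ℝ) : mgf X₁ μ t = exp (smallJumpCumulant α t) := hmgf t
  refine ⟨fun y hy₀ hy₁ => ?_, fun y hy₀ _ => ?_⟩
  · have ht₁ : (2 - α) * y ≤ 1 := by rwa [le_div_iff₀ hσ, mul_comm] at hy₁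
    refine measureReal_ge_le_of_mgf_le hσ hy₀ (hXint _) ?_
    rw [hmgf', exp_le_exp]
    exact smallJumpCumulant_le_of_nonneg hα.2 (mul_nonneg hσ.le hy₀) ht₁
  · calc (μ {ω | X₁ ω ≤ -y}).toReal
        ≤ exp 0 * exp (-(1 / 2) * (2 - α) * y ^ 2) := by
          refine measureReal_le_neg_le_of_mgf_le hσ hy₀ (hXint _) ?_
          rw [hmgf', exp_le_exp, zero_add, ← neg_sq]
          exact smallJumpCumulant_le_of_nonpos hα.2 (neg_nonpos.2 (mul_nonneg hσ.le hy₀))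
      _ ≤ exp (4 / 3) * exp (-(1 / 2) * (2 - α) * y ^ 2) := by gcongr; norm_num

/-- Fix `α ∈ (1,2)` and let `X₁` be a random variable with moment
generating function `E[exp(t X₁)] = exp(∫₀¹ (e^{tx} - 1 - tx) x^{-α-1} dx)`. Then for
`0 ≤ y ≤ 1/(2-α)` one has `P(X₁ ≥ y) ≤ e^{1/4} e^{-(2-α)y²/2}` and for
`0 ≤ y ≤ 2/(2-α)` one has `P(X₁ ≤ -y) ≤ e^{4/3} e^{-(2-α)y²/2}`. -/
theorem gaussian_tail_small_jumps_totally_asymmetric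
    {Ω : Type*} [MeasurableSpace Ω] (μ : Measure Ω) [IsProbabilityMeasure μ]
    (α : ℝ) (hα : α ∈ Set.Ioo (1:ℝ) 2)
    (X₁ : Ω → ℝ) (hXmeas : Measurable X₁)
    (hXint : ∀ t : ℝ, Integrable (fun ω => Real.exp (t * X₁ ω)) μ)
    (hmgf : ∀ t : ℝ, ∫ ω, Real.exp (t * X₁ ω) ∂μ
      = Real.exp (∫ x in Set.Ioo (0:ℝ) 1, (Real.exp (t*x) - 1 - t*x) * x ^ (-α-1))) :
    (∀ y : ℝ, 0 ≤ y → y ≤ 1/(2-α) →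
      (μ {ω | y ≤ X₁ ω}).toReal
        ≤ Real.exp (1/4) * Real.exp (-(1/2) * (2-α) * y^2))
    ∧ (∀ y : ℝ, 0 ≤ y → y ≤ 2/(2-α) →
      (μ {ω | X₁ ω ≤ -y}).toReal
        ≤ Real.exp (4/3) * Real.exp (-(1/2) * (2-α) * y^2)) :=
  gaussian_tail_small_jumps_totally_asymmetric_general μ α hα X₁ hXint hmgf
end

section
/- For every y ∈ [2/√(2−α), 1/(2−α)] one has P( X₁ ≥ y/4 ) ≥ 10^{−2} · exp(−(2−α) y²), and for every y ∈ [2/√(2−α), 2/(2−α)] one has P( X₁ ≤ −y/24 ) ≥ 10^{−2} · exp(−(2−α) y²). -/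
/-!
Write `ψ(t) = ∫₀¹ (e^{tx} - 1 - tx) x^{-α-1} dx` (`laplaceExponent α t`), so that
`E e^{tX₁} = e^{ψ(t)}`. Second-order Taylor bounds for `e^u - 1 - u` make `ψ` Gaussian-like:
`ψ(t) ≥ t²/(2(2-α))` with a cubic error `t³eᵗ/6` above when `t ≥ 0`, and
`ψ(t) ≤ t²/(2(2-α))` with a factor `eᵗ` lost below when `t ≤ 0`.

The Paley–Zygmund inequality for `Y = e^{tX₁}` on an event `A` outside which `tX₁ ≤ b` gives
`P(A) ≥ (1 - e^{b-ψ(t)})² e^{2ψ(t) - ψ(2t)}`. Taking `t = 5(2-α)y/8` for `A = {X₁ ≥ y/4}` and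
`t = -(2-α)y/2` for `A = {X₁ ≤ -y/24}`, the bounds on `ψ` make the right-hand side at least
`10⁻² e^{-(2-α)y²}` on the stated ranges of `y`.
-/

open MeasureTheory Real Set

lemma le_of_hasDerivAt_le_of_nonneg {f g f' g' : ℝ → ℝ} (hf : ∀ x, HasDerivAt f (f' x) x)
    (hg : ∀ x, HasDerivAt g (g' x) x) (h₀ : f 0 ≤ g 0) (hd : ∀ x, 0 ≤ x → f' x ≤ g' x)
    {u : ℝ} (hu : 0 ≤ u) : f u ≤ g u :=
  image_le_of_deriv_right_le_deriv_boundary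
    (fun x _ => (hf x).continuousAt.continuousWithinAt) (fun x _ => (hf x).hasDerivWithinAt) h₀
    (fun x _ => (hg x).continuousAt.continuousWithinAt) (fun x _ => (hg x).hasDerivWithinAt)
    (fun x hx => hd x hx.1) ⟨hu, le_rfl⟩

lemma le_of_hasDerivAt_le_of_nonpos {f g f' g' : ℝ → ℝ} (hf : ∀ x, HasDerivAt f (f' x) x)
    (hg : ∀ x, HasDerivAt g (g' x) x) (h₀ : f 0 ≤ g 0) (hd : ∀ x, x ≤ 0 → g' x ≤ f' x)
    {u : ℝ} (hu : u ≤ 0) : f u ≤ g u := by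
  simpa using le_of_hasDerivAt_le_of_nonneg (u := -u) (f := fun x => f (-x))
    (g := fun x => g (-x)) (fun x => (hf (-x)).comp x (hasDerivAt_neg x))
    (fun x => (hg (-x)).comp x (hasDerivAt_neg x)) (by simpa using h₀)
    (fun x hx => by simpa using hd (-x) (by linarith)) (by linarith)

lemma one_sub_mul_exp_le_one (x : ℝ) : (1 - x) * exp x ≤ 1 := by
  have h := mul_le_mul_of_nonneg_right (one_sub_le_exp_neg x) (exp_pos x).le
  rwa [← exp_add, neg_add_cancel, exp_zero] at h

lemma sq_div_two_le_exp_sub_one_sub {u : ℝ} (hu : 0 ≤ u) : u ^ 2 / 2 ≤ exp u - 1 - u := by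
  linarith [quadratic_le_exp_of_nonneg hu]

lemma exp_sub_one_sub_le_sq_div_two_mul_exp {u : ℝ} (hu : 0 ≤ u) :
    exp u - 1 - u ≤ u ^ 2 / 2 * exp u := by
  refine le_of_hasDerivAt_le_of_nonneg
    (fun x => ((hasDerivAt_exp x).sub_const 1).sub (hasDerivAt_id x))
    (fun x => ((hasDerivAt_pow 2 x).div_const 2).mul (hasDerivAt_exp x)) (by simp)
    (fun x hx => ?_) hu
  have := one_sub_mul_exp_le_one x
  simp only [Nat.cast_ofNat, Nat.add_one_sub_one, pow_one]
  nlinarith [exp_pos x]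

lemma exp_sub_one_sub_le_sq_div_two_add_cube {u : ℝ} (hu : 0 ≤ u) :
    exp u - 1 - u ≤ u ^ 2 / 2 + u ^ 3 / 6 * exp u := by
  refine le_of_hasDerivAt_le_of_nonneg
    (fun x => ((hasDerivAt_exp x).sub_const 1).sub (hasDerivAt_id x))
    (fun x => ((hasDerivAt_pow 2 x).div_const 2).add
      (((hasDerivAt_pow 3 x).div_const 6).mul (hasDerivAt_exp x))) (by simp)
    (fun x hx => ?_) hu
  have := exp_sub_one_sub_le_sq_div_two_mul_exp hx
  simp only [Nat.cast_ofNat, Nat.add_one_sub_one, pow_one]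
  nlinarith [exp_pos x, pow_nonneg hx 3]

lemma exp_sub_one_sub_le_sq_div_two {u : ℝ} (hu : u ≤ 0) : exp u - 1 - u ≤ u ^ 2 / 2 := by
  refine le_of_hasDerivAt_le_of_nonpos
    (fun x => ((hasDerivAt_exp x).sub_const 1).sub (hasDerivAt_id x))
    (fun x => (hasDerivAt_pow 2 x).div_const 2) (by simp) (fun x hx => ?_) hu
  simp only [Nat.cast_ofNat, Nat.add_one_sub_one, pow_one]
  linarith [add_one_le_exp x]

lemma sq_div_two_mul_exp_le_exp_sub_one_sub {u : ℝ} (hu : u ≤ 0) :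
    u ^ 2 / 2 * exp u ≤ exp u - 1 - u := by
  refine le_of_hasDerivAt_le_of_nonpos
    (fun x => ((hasDerivAt_pow 2 x).div_const 2).mul (hasDerivAt_exp x))
    (fun x => ((hasDerivAt_exp x).sub_const 1).sub (hasDerivAt_id x)) (by simp)
    (fun x hx => ?_) hu
  have := one_sub_mul_exp_le_one x
  simp only [Nat.cast_ofNat, Nat.add_one_sub_one, pow_one]
  nlinarith [exp_pos x]

lemma exp_sub_one_sub_le_sq_div_two_mul_exp_abs (u : ℝ) :
    exp u - 1 - u ≤ u ^ 2 / 2 * exp |u| := by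
  rcases le_total 0 u with hu | hu
  · rw [abs_of_nonneg hu]
    exact exp_sub_one_sub_le_sq_div_two_mul_exp hu
  · calc exp u - 1 - u ≤ u ^ 2 / 2 := exp_sub_one_sub_le_sq_div_two hu
      _ ≤ u ^ 2 / 2 * exp |u| := le_mul_of_one_le_right (by positivity) (one_le_exp (abs_nonneg u))

lemma div_one_add_le_one_sub_exp {x c : ℝ} (hc : 0 ≤ c) (hx : x ≤ -c) :
    c / (1 + c) ≤ 1 - exp x := by
  have h : exp x ≤ (1 + c)⁻¹ := by
    calc exp x ≤ exp (-c) := exp_le_exp.2 hx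
      _ ≤ (1 + c)⁻¹ := by
        rw [exp_neg]
        exact inv_anti₀ (by linarith) (by linarith [add_one_le_exp c])
  have : c / (1 + c) = 1 - (1 + c)⁻¹ := by field_simp; ring
  linarith

lemma exp_five_fourths_le_four : exp (5 / 4) ≤ 4 := by
  have h := exp_bound_div_one_sub_of_interval' (x := 1 / 4) (by norm_num) (by norm_num)
  have h' : exp (5 / 4) = exp 1 * exp (1 / 4) := by rw [← exp_add]; norm_num
  rw [h']
  nlinarith [exp_one_lt_d9, exp_pos 1, exp_pos (1 / 4)]

section LaplaceExponent

variable {α : ℝ}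

lemma integrableOn_pow_mul_rpow_Ioo {n : ℕ} (h : α < n) :
    IntegrableOn (fun x : ℝ => x ^ n * x ^ (-α - 1)) (Ioo 0 1) := by
  have hi := intervalIntegral.intervalIntegrable_rpow' (a := 0) (b := 1)
    (r := n - α - 1) (by linarith)
  rw [intervalIntegrable_iff, uIoc_of_le zero_le_one] at hi
  refine (hi.mono_set Ioo_subset_Ioc_self).congr_fun (fun x hx => ?_) measurableSet_Ioo
  rw [← rpow_natCast, ← rpow_add hx.1]
  ring_nf

lemma integral_pow_mul_rpow_Ioo {n : ℕ} (h : α < n) :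
    ∫ x in Ioo (0 : ℝ) 1, x ^ n * x ^ (-α - 1) = 1 / (n - α) := by
  rw [setIntegral_congr_fun measurableSet_Ioo (g := fun x : ℝ => x ^ ((n : ℝ) - α - 1))
      (fun x hx => by rw [← rpow_natCast, ← rpow_add hx.1]; ring_nf),
    ← integral_Ioc_eq_integral_Ioo, ← intervalIntegral.integral_of_le zero_le_one,
    integral_rpow (Or.inl (by linarith)), one_rpow, zero_rpow (by linarith)]
  ring_nf

noncomputable def laplaceExponent (α t : ℝ) : ℝ :=
  ∫ x in Ioo (0 : ℝ) 1, (exp (t * x) - 1 - t * x) * x ^ (-α - 1)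

lemma integrableOn_laplaceExponent_integrand (hα : α < 2) (t : ℝ) :
    IntegrableOn (fun x : ℝ => (exp (t * x) - 1 - t * x) * x ^ (-α - 1)) (Ioo 0 1) := by
  refine Integrable.mono' ((integrableOn_pow_mul_rpow_Ioo (n := 2) (by simpa)).const_mul
    (t ^ 2 / 2 * exp |t|)) (by fun_prop) ?_
  filter_upwards [ae_restrict_mem measurableSet_Ioo] with x ⟨hx₀, hx₁⟩
  have hexp : exp |t * x| ≤ exp |t| := by
    rw [exp_le_exp, abs_mul, abs_of_pos hx₀]
    exact mul_le_of_le_one_right (abs_nonneg t) hx₁.le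
  rw [norm_mul, norm_of_nonneg (by linarith [add_one_le_exp (t * x)]),
    norm_of_nonneg (rpow_nonneg hx₀.le _), ← mul_assoc]
  refine mul_le_mul_of_nonneg_right ?_ (rpow_nonneg hx₀.le _)
  calc exp (t * x) - 1 - t * x ≤ (t * x) ^ 2 / 2 * exp |t * x| :=
        exp_sub_one_sub_le_sq_div_two_mul_exp_abs _
    _ ≤ t ^ 2 / 2 * exp |t| * x ^ 2 := by
        rw [show (t * x) ^ 2 / 2 * exp |t * x| = t ^ 2 / 2 * exp |t * x| * x ^ 2 by ring]
        gcongr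

lemma le_laplaceExponent {t a : ℝ} (hα : α < 2)
    (h : ∀ x ∈ Ioo (0 : ℝ) 1, a * x ^ 2 ≤ exp (t * x) - 1 - t * x) :
    a / (2 - α) ≤ laplaceExponent α t :=
  calc a / (2 - α) = ∫ x in Ioo (0 : ℝ) 1, a * (x ^ 2 * x ^ (-α - 1)) := by
        rw [integral_const_mul, integral_pow_mul_rpow_Ioo (by simpa)]
        push_cast; ring
    _ ≤ laplaceExponent α t :=
        setIntegral_mono_on (((integrableOn_pow_mul_rpow_Ioo (by simpa)).const_mul a))
          (integrableOn_laplaceExponent_integrand hα t) measurableSet_Ioo fun x hx => by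
            rw [← mul_assoc]
            exact mul_le_mul_of_nonneg_right (h x hx) (rpow_nonneg hx.1.le _)

lemma laplaceExponent_le {t a b : ℝ} (hα : α < 2)
    (h : ∀ x ∈ Ioo (0 : ℝ) 1, exp (t * x) - 1 - t * x ≤ a * x ^ 2 + b * x ^ 3) :
    laplaceExponent α t ≤ a / (2 - α) + b / (3 - α) :=
  have h₂ := (integrableOn_pow_mul_rpow_Ioo (α := α) (n := 2) (by simpa)).const_mul a
  have h₃ :=
    (integrableOn_pow_mul_rpow_Ioo (α := α) (n := 3) (by push_cast; linarith)).const_mul b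
  calc laplaceExponent α t
      ≤ ∫ x in Ioo (0 : ℝ) 1, (a * (x ^ 2 * x ^ (-α - 1)) + b * (x ^ 3 * x ^ (-α - 1))) :=
        setIntegral_mono_on (integrableOn_laplaceExponent_integrand hα t) (by exact h₂.add h₃)
          measurableSet_Ioo fun x hx => by
            rw [← mul_assoc, ← mul_assoc, ← add_mul]
            exact mul_le_mul_of_nonneg_right (h x hx) (rpow_nonneg hx.1.le _)
    _ = a / (2 - α) + b / (3 - α) := by
        rw [integral_add h₂ h₃, integral_const_mul, integral_const_mul,
          integral_pow_mul_rpow_Ioo (by simpa), integral_pow_mul_rpow_Ioo (by push_cast; linarith)]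
        push_cast; ring

lemma laplaceExponent_ge_of_nonneg {t : ℝ} (hα : α < 2) (ht : 0 ≤ t) :
    t ^ 2 / (2 * (2 - α)) ≤ laplaceExponent α t := by
  rw [← div_div]
  refine le_laplaceExponent hα fun x hx => ?_
  have := sq_div_two_le_exp_sub_one_sub (mul_nonneg ht hx.1.le)
  linarith [mul_pow t x 2]

lemma laplaceExponent_le_of_nonneg {t : ℝ} (hα : α < 2) (ht : 0 ≤ t) :
    laplaceExponent α t ≤ t ^ 2 / (2 * (2 - α)) + t ^ 3 / 6 * exp t := by
  have hb : 0 ≤ t ^ 3 / 6 * exp t := by positivity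
  calc laplaceExponent α t ≤ t ^ 2 / 2 / (2 - α) + t ^ 3 / 6 * exp t / (3 - α) := by
        refine laplaceExponent_le hα fun x hx => ?_
        have hu := exp_sub_one_sub_le_sq_div_two_add_cube (mul_nonneg ht hx.1.le)
        have he : exp (t * x) ≤ exp t := exp_le_exp.2 (mul_le_of_le_one_right ht hx.2.le)
        have : (t * x) ^ 3 / 6 * exp (t * x) ≤ t ^ 3 / 6 * exp t * x ^ 3 := by
          rw [show (t * x) ^ 3 / 6 * exp (t * x) = t ^ 3 / 6 * exp (t * x) * x ^ 3 by ring]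
          exact mul_le_mul_of_nonneg_right (by gcongr) (pow_nonneg hx.1.le 3)
        linarith [mul_pow t x 2]
    _ ≤ t ^ 2 / (2 * (2 - α)) + t ^ 3 / 6 * exp t := by
        rw [div_div]
        gcongr
        exact div_le_self hb (by linarith)

lemma laplaceExponent_ge_of_nonpos {t : ℝ} (hα : α < 2) (ht : t ≤ 0) :
    t ^ 2 / (2 * (2 - α)) * exp t ≤ laplaceExponent α t := by
  calc t ^ 2 / (2 * (2 - α)) * exp t = t ^ 2 / 2 * exp t / (2 - α) := by
        rw [mul_div_right_comm, div_div]
    _ ≤ laplaceExponent α t := le_laplaceExponent hα fun x hx => by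
      have he : exp t ≤ exp (t * x) := exp_le_exp.2 (by nlinarith [hx.2])
      calc t ^ 2 / 2 * exp t * x ^ 2 = (t * x) ^ 2 / 2 * exp t := by ring
        _ ≤ (t * x) ^ 2 / 2 * exp (t * x) := by gcongr
        _ ≤ _ := sq_div_two_mul_exp_le_exp_sub_one_sub
              (mul_nonpos_of_nonpos_of_nonneg ht hx.1.le)

lemma laplaceExponent_le_of_nonpos {t : ℝ} (hα : α < 2) (ht : t ≤ 0) :
    laplaceExponent α t ≤ t ^ 2 / (2 * (2 - α)) := by
  rw [← div_div]
  simpa using laplaceExponent_le (t := t) (a := t ^ 2 / 2) (b := 0) hα fun x hx => by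
    have := exp_sub_one_sub_le_sq_div_two (mul_nonpos_of_nonpos_of_nonneg ht hx.1.le)
    linarith [mul_pow t x 2]

end LaplaceExponent

section ExponentialMoments

variable {Ω : Type*} [MeasurableSpace Ω] {μ : Measure Ω}

lemma sq_integral_le_measureReal_univ_mul_integral_sq [IsFiniteMeasure μ] {Y : Ω → ℝ}
    (hY : Integrable Y μ) (hY₂ : Integrable (fun ω => Y ω ^ 2) μ) :
    (∫ ω, Y ω ∂μ) ^ 2 ≤ μ.real univ * ∫ ω, Y ω ^ 2 ∂μ := by
  have hquad : ∀ s : ℝ,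
      0 ≤ μ.real univ * (s * s) + (-2 * ∫ ω, Y ω ∂μ) * s + ∫ ω, Y ω ^ 2 ∂μ := fun s => by
    have hexpand : ∫ ω, (Y ω - s) ^ 2 ∂μ
        = ∫ ω, Y ω ^ 2 ∂μ - 2 * s * ∫ ω, Y ω ∂μ + μ.real univ * s ^ 2 := by
      have hpt : (fun ω => (Y ω - s) ^ 2) = fun ω => Y ω ^ 2 - 2 * s * Y ω + s ^ 2 := by
        ext ω; ring
      have hi : Integrable (fun ω => Y ω ^ 2 - 2 * s * Y ω) μ := hY₂.sub (hY.const_mul _)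
      rw [hpt, integral_add hi (integrable_const _), integral_sub hY₂ (hY.const_mul _),
        integral_const_mul, integral_const, smul_eq_mul]
    have : 0 ≤ ∫ ω, (Y ω - s) ^ 2 ∂μ := integral_nonneg fun ω => sq_nonneg _
    linarith
  have := discrim_le_zero hquad
  rw [discrim] at this
  linarith

-- Paley–Zygmund: discard the mass `≤ c` that `Y` has on `Aᶜ`, then Cauchy–Schwarz on `A`.
lemma sub_sq_le_measureReal_mul_integral_sq [IsProbabilityMeasure μ] {Y : Ω → ℝ}
    (hY : Integrable Y μ) (hY₂ : Integrable (fun ω => Y ω ^ 2) μ) {A : Set Ω}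
    (hA : MeasurableSet A) {c : ℝ} (hc₀ : 0 ≤ c) (hc : c ≤ ∫ ω, Y ω ∂μ)
    (hAc : ∀ ω ∉ A, Y ω ≤ c) :
    (∫ ω, Y ω ∂μ - c) ^ 2 ≤ μ.real A * ∫ ω, Y ω ^ 2 ∂μ := by
  have hcompl : ∫ ω in Aᶜ, Y ω ∂μ ≤ c :=
    calc ∫ ω in Aᶜ, Y ω ∂μ ≤ ∫ _ in Aᶜ, c ∂μ :=
          setIntegral_mono_on hY.integrableOn (integrable_const _) hA.compl hAc
      _ = μ.real Aᶜ * c := by rw [setIntegral_const, smul_eq_mul]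
      _ ≤ c := mul_le_of_le_one_left hc₀ measureReal_le_one
  have hsplit := integral_add_compl hA hY
  calc (∫ ω, Y ω ∂μ - c) ^ 2 ≤ (∫ ω in A, Y ω ∂μ) ^ 2 := by
        gcongr
        linarith
    _ ≤ μ.real A * ∫ ω in A, Y ω ^ 2 ∂μ := by
        simpa using sq_integral_le_measureReal_univ_mul_integral_sq hY.integrableOn
          hY₂.integrableOn
    _ ≤ μ.real A * ∫ ω, Y ω ^ 2 ∂μ := mul_le_mul_of_nonneg_left
        (setIntegral_le_integral hY₂ (.of_forall fun ω => sq_nonneg _)) measureReal_nonneg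

lemma one_sub_exp_sq_mul_exp_le_measureReal [IsProbabilityMeasure μ] {Z : Ω → ℝ}
    (h₁ : Integrable (fun ω => exp (Z ω)) μ) (h₂ : Integrable (fun ω => exp (2 * Z ω)) μ)
    {A : Set Ω} (hA : MeasurableSet A) {b ℓ u : ℝ} (hℓ : exp ℓ ≤ ∫ ω, exp (Z ω) ∂μ)
    (hu : ∫ ω, exp (2 * Z ω) ∂μ ≤ exp u) (hb : b ≤ ℓ) (hAc : ∀ ω ∉ A, Z ω ≤ b) :
    (1 - exp (b - ℓ)) ^ 2 * exp (2 * ℓ - u) ≤ μ.real A := by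
  have hsq : ∀ ω, exp (Z ω) ^ 2 = exp (2 * Z ω) := fun ω => by
    rw [← exp_nat_mul]; norm_num
  have hbℓ : exp b ≤ exp ℓ := exp_le_exp.2 hb
  have hPZ := sub_sq_le_measureReal_mul_integral_sq h₁ (by simpa only [hsq] using h₂) hA
    (exp_pos b).le (hbℓ.trans hℓ) fun ω hω => exp_le_exp.2 (hAc ω hω)
  simp only [hsq] at hPZ
  have key : (exp ℓ - exp b) ^ 2 ≤ μ.real A * exp u :=
    calc (exp ℓ - exp b) ^ 2 ≤ (∫ ω, exp (Z ω) ∂μ - exp b) ^ 2 := by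
          gcongr
      _ ≤ μ.real A * ∫ ω, exp (2 * Z ω) ∂μ := hPZ
      _ ≤ μ.real A * exp u := by gcongr
  have hid : (1 - exp (b - ℓ)) ^ 2 * exp (2 * ℓ - u) = (exp ℓ - exp b) ^ 2 / exp u := by
    rw [exp_sub, exp_sub, mul_comm 2 ℓ, exp_mul, rpow_two]
    field_simp
  rw [hid, div_le_iff₀ (exp_pos u)]
  exact key

variable [IsProbabilityMeasure μ] {X : Ω → ℝ} {K : ℝ → ℝ} {β y : ℝ}

lemma exp_neg_le_measureReal_upper_tail (hX : Measurable X)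
    (hint : ∀ t, Integrable (fun ω => exp (t * X ω)) μ)
    (hK : ∀ t, ∫ ω, exp (t * X ω) ∂μ = exp (K t)) (hβ : 0 < β)
    (hK_ge : ∀ t, 0 ≤ t → t ^ 2 / (2 * β) ≤ K t)
    (hK_le : ∀ t, 0 ≤ t → K t ≤ t ^ 2 / (2 * β) + t ^ 3 / 6 * exp t)
    (hy₀ : 0 ≤ y) (hy : 4 ≤ β * y ^ 2) (hy' : β * y ≤ 1) :
    1 / 100 * exp (-β * y ^ 2) ≤ μ.real {ω | y / 4 ≤ X ω} := by
  set m := β * y ^ 2 with hm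
  set t := 5 / 8 * (β * y) with ht_def
  have ht : 0 ≤ t := by positivity
  have hb : t * (y / 4) - t ^ 2 / (2 * β) = -(5 / 128 * m) := by
    rw [hm, ht_def]; field_simp; ring
  have hPZ := one_sub_exp_sq_mul_exp_le_measureReal (Z := fun ω => t * X ω) (hint t)
    (by simpa only [mul_assoc] using hint (2 * t)) (measurableSet_le measurable_const hX)
    (b := t * (y / 4)) (ℓ := t ^ 2 / (2 * β))
    (u := (2 * t) ^ 2 / (2 * β) + (2 * t) ^ 3 / 6 * exp (2 * t))
    (by rw [hK]; exact exp_le_exp.2 (hK_ge t ht))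
    (by simp only [← mul_assoc, hK]; exact exp_le_exp.2 (hK_le _ (by positivity)))
    (by linarith) (fun ω hω => mul_le_mul_of_nonneg_left (not_le.1 hω).le ht)
  have hexponent : -m ≤
      2 * (t ^ 2 / (2 * β)) - ((2 * t) ^ 2 / (2 * β) + (2 * t) ^ 3 / 6 * exp (2 * t)) := by
    have hβy : 0 ≤ β * y := by positivity
    have hβ4 : β ≤ 1 / 4 := by nlinarith
    have ht3 : t ^ 3 ≤ 125 / 2048 * m := by
      have : t ^ 3 = 125 / 512 * (β * y) * β * m := by rw [hm, ht_def]; ring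
      rw [this]
      have : 0 ≤ m := by positivity
      have : (β * y) * β ≤ 1 / 4 := by nlinarith
      nlinarith
    have hexp : exp (2 * t) ≤ 4 := (exp_le_exp.2 (by linarith)).trans exp_five_fourths_le_four
    have : 2 * (t ^ 2 / (2 * β)) - (2 * t) ^ 2 / (2 * β) = -(25 / 64 * m) := by
      rw [hm, ht_def]; field_simp; ring
    nlinarith [pow_nonneg ht 3]
  have hfactor : 1 / 10 ≤ 1 - exp (t * (y / 4) - t ^ 2 / (2 * β)) :=
    le_trans (by norm_num) (div_one_add_le_one_sub_exp (c := 5 / 32) (by norm_num) (by linarith))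
  calc 1 / 100 * exp (-β * y ^ 2) = (1 / 10) ^ 2 * exp (-m) := by norm_num [m]
    _ ≤ _ := by gcongr
    _ ≤ _ := hPZ

lemma exp_neg_le_measureReal_lower_tail (hX : Measurable X)
    (hint : ∀ t, Integrable (fun ω => exp (t * X ω)) μ)
    (hK : ∀ t, ∫ ω, exp (t * X ω) ∂μ = exp (K t)) (hβ : 0 < β)
    (hK_ge : ∀ t, t ≤ 0 → t ^ 2 / (2 * β) * exp t ≤ K t)
    (hK_le : ∀ t, t ≤ 0 → K t ≤ t ^ 2 / (2 * β))
    (hy₀ : 0 ≤ y) (hy : 4 ≤ β * y ^ 2) (hy' : β * y ≤ 2) :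
    1 / 100 * exp (-β * y ^ 2) ≤ μ.real {ω | X ω ≤ -(y / 24)} := by
  set m := β * y ^ 2 with hm
  set t := -(β * y / 2) with ht_def
  have ht : t ≤ 0 := by rw [ht_def]; linarith [mul_nonneg hβ.le hy₀]
  have hexp_t : 4 / 11 ≤ exp t :=
    calc (4 / 11 : ℝ) ≤ exp (-1) := by linarith [exp_neg_one_gt_d9]
      _ ≤ exp t := exp_le_exp.2 (by linarith)
  have hℓ : t ^ 2 / (2 * β) * exp t = m / 8 * exp t := by rw [hm, ht_def]; field_simp; ring
  have hb : t * -(y / 24) = m / 48 := by rw [hm, ht_def]; ring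
  have hu : (2 * t) ^ 2 / (2 * β) = m / 2 := by rw [hm, ht_def]; field_simp
  have hPZ := one_sub_exp_sq_mul_exp_le_measureReal (Z := fun ω => t * X ω) (hint t)
    (by simpa only [mul_assoc] using hint (2 * t)) (measurableSet_le hX measurable_const)
    (b := t * -(y / 24)) (ℓ := t ^ 2 / (2 * β) * exp t) (u := (2 * t) ^ 2 / (2 * β))
    (by rw [hK]; exact exp_le_exp.2 (hK_ge t ht))
    (by simp only [← mul_assoc, hK]; exact exp_le_exp.2 (hK_le _ (by linarith)))
    (by rw [hℓ, hb]; nlinarith) (fun ω hω => mul_le_mul_of_nonpos_left (not_le.1 hω).le ht)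
  have hfactor : 13 / 145 ≤ 1 - exp (t * -(y / 24) - t ^ 2 / (2 * β) * exp t) :=
    le_trans (by norm_num)
      (div_one_add_le_one_sub_exp (c := 13 / 132) (by norm_num) (by rw [hℓ, hb]; nlinarith))
  have hexponent :
      -m + 13 / 22 * m ≤ 2 * (t ^ 2 / (2 * β) * exp t) - (2 * t) ^ 2 / (2 * β) := by
    rw [hℓ, hu]; nlinarith
  have hgain : 37 / 11 ≤ exp (13 / 22 * m) := by linarith [add_one_le_exp (13 / 22 * m)]
  calc 1 / 100 * exp (-β * y ^ 2) ≤ (13 / 145) ^ 2 * (37 / 11 * exp (-m)) := by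
        rw [neg_mul]; nlinarith [exp_pos (-m)]
    _ ≤ (13 / 145) ^ 2 * exp (-m + 13 / 22 * m) := by
        rw [exp_add, mul_comm (exp (-m))]; gcongr
    _ ≤ _ := by gcongr
    _ ≤ _ := hPZ

end ExponentialMoments

lemma nonneg_and_four_le_mul_sq_of_mem_Icc {β y c : ℝ} (hβ : 0 < β)
    (hy : y ∈ Icc (2 / √β) (c / β)) :
    0 ≤ y ∧ 4 ≤ β * y ^ 2 ∧ β * y ≤ c := by
  have hs : 0 < √β := sqrt_pos.2 hβ
  have h2 : 2 ≤ y * √β := (div_le_iff₀ hs).1 hy.1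
  refine ⟨(div_nonneg zero_le_two hs.le).trans hy.1, ?_, by linarith [(le_div_iff₀ hβ).1 hy.2]⟩
  calc (4 : ℝ) ≤ (y * √β) ^ 2 := by nlinarith
    _ = β * y ^ 2 := by rw [mul_pow, sq_sqrt hβ.le]; ring

/-- Fix `α ∈ (1,2)` and let `X₁` be a random variable with moment
generating function `E[exp(t X₁)] = exp(∫₀¹ (e^{tx} - 1 - tx) x^{-α-1} dx)`. Then for
`y ∈ [2/√(2-α), 1/(2-α)]` one has `P(X₁ ≥ y/4) ≥ 10⁻² e^{-(2-α)y²}` and for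
`y ∈ [2/√(2-α), 2/(2-α)]` one has `P(X₁ ≤ -y/24) ≥ 10⁻² e^{-(2-α)y²}`. -/
theorem gaussian_lower_tail_small_jumps_totally_asymmetric
    {Ω : Type*} [MeasurableSpace Ω] (μ : Measure Ω) [IsProbabilityMeasure μ]
    (α : ℝ) (hα : α ∈ Set.Ioo (1:ℝ) 2)
    (X₁ : Ω → ℝ) (hXmeas : Measurable X₁)
    (hXint : ∀ t : ℝ, Integrable (fun ω => Real.exp (t * X₁ ω)) μ)
    (hmgf : ∀ t : ℝ, ∫ ω, Real.exp (t * X₁ ω) ∂μ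
      = Real.exp (∫ x in Set.Ioo (0:ℝ) 1, (Real.exp (t*x) - 1 - t*x) * x ^ (-α-1))) :
    (∀ y ∈ Set.Icc (2 / Real.sqrt (2-α)) (1/(2-α)),
      (1/100) * Real.exp (-(2-α) * y^2) ≤ (μ {ω | y/4 ≤ X₁ ω}).toReal)
    ∧ (∀ y ∈ Set.Icc (2 / Real.sqrt (2-α)) (2/(2-α)),
      (1/100) * Real.exp (-(2-α) * y^2) ≤ (μ {ω | X₁ ω ≤ -(y/24)}).toReal) := by
  have hα₂ : α < 2 := hα.2
  have hβ : 0 < 2 - α := by linarith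
  constructor
  · intro y hy
    obtain ⟨hy₀, hy, hy'⟩ := nonneg_and_four_le_mul_sq_of_mem_Icc hβ hy
    exact exp_neg_le_measureReal_upper_tail (K := laplaceExponent α) hXmeas hXint hmgf hβ
      (fun _ => laplaceExponent_ge_of_nonneg hα₂) (fun _ => laplaceExponent_le_of_nonneg hα₂)
      hy₀ hy hy'
  · intro y hy
    obtain ⟨hy₀, hy, hy'⟩ := nonneg_and_four_le_mul_sq_of_mem_Icc hβ hy
    exact exp_neg_le_measureReal_lower_tail (K := laplaceExponent α) hXmeas hXint hmgf hβ
      (fun _ => laplaceExponent_ge_of_nonpos hα₂) (fun _ => laplaceExponent_le_of_nonpos hα₂)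
      hy₀ hy hy'
end
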